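/- A Petri net N with incidence matrix I is not structurally bounded if and only if there exists a rational vector Y ≥ 0, Y ≠ 0, with I·Y ≥ 0 and I·Y ≠ 0 (i.e., I·Y ⪈ 0), where Y ranges over ℚ^T with nonnegative entries. -/

import Mathlib

open Classical

structure PetriNet (P T : Type) where
  pre  : P → T → ℕ
  post : T → P → ℕ

namespace PetriNet

variable {P T : Type}

def enabled (N : PetriNet P T) (M : P → ℕ) (t : T) : Prop :=
  ∀ p, N.pre p t ≤ M p

def fire (N : PetriNet P T) (M : P → ℕ) (t : T) : P → ℕ :=
  fun p => M p - N.pre p t + N.post t p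

def feasible (N : PetriNet P T) : (P → ℕ) → List T → Prop
  | _, [] => True
  | M, t :: σ => N.enabled M t ∧ N.feasible (N.fire M t) σ

def fireSeq (N : PetriNet P T) : (P → ℕ) → List T → (P → ℕ)
  | M, [] => M
  | M, t :: σ => N.fireSeq (N.fire M t) σ

/-- `M'` is reachable from `M` by some feasible firing sequence. -/
def reach (N : PetriNet P T) (M M' : P → ℕ) : Prop :=
  ∃ σ : List T, N.feasible M σ ∧ N.fireSeq M σ = M'

/-- Liveness: from every reachable marking, every transition can eventually be enabled. -/
def live (N : PetriNet P T) (M0 : P → ℕ) : Prop :=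
  ∀ M, N.reach M0 M → ∀ t, ∃ M', N.reach M M' ∧ N.enabled M' t

def incidence (N : PetriNet P T) (p : P) (t : T) : ℤ :=
  (N.post t p : ℤ) - (N.pre p t : ℤ)

/-- Potential reachability: the state equation `M = M0 + I·Y` has a solution `Y ∈ ℕ^T`. -/
def potReach [Fintype T] (N : PetriNet P T) (M0 M : P → ℕ) : Prop :=
  ∃ Y : T → ℕ, ∀ p, (M p : ℤ) = (M0 p : ℤ) + ∑ t, N.incidence p t * (Y t : ℤ)

/-- A siphon: a nonempty set of places whose set of input transitions is
included in its set of output transitions. -/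
def siphon (N : PetriNet P T) (D : Set P) : Prop :=
  D.Nonempty ∧ ∀ t, (∃ p ∈ D, 0 < N.post t p) → ∃ p ∈ D, 0 < N.pre p t

/-- `D` is deadlocked at `M`: every place of `D` marks below each of its output weights. -/
def deadlockedAt (N : PetriNet P T) (D : Set P) (M : P → ℕ) : Prop :=
  ∀ p ∈ D, ∀ t, 0 < N.pre p t → M p < N.pre p t

def reversible (N : PetriNet P T) (M0 : P → ℕ) : Prop :=
  ∀ M, N.reach M0 M → N.reach M M0

def deadlockable (N : PetriNet P T) (M0 : P → ℕ) : Prop :=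
  ∃ M, N.reach M0 M ∧ ∀ t, ¬ N.enabled M t

def bounded (N : PetriNet P T) (M0 : P → ℕ) : Prop :=
  ∃ k, ∀ M, N.reach M0 M → ∀ p, M p ≤ k

def structBounded (N : PetriNet P T) : Prop :=
  ∀ M0 : P → ℕ, N.bounded M0

/-- All output weights of each place are equal. -/
def homogeneous (N : PetriNet P T) : Prop :=
  ∀ p t t', 0 < N.pre p t → 0 < N.pre p t' → N.pre p t = N.pre p t'

/-- A place with at least two output transitions. -/
def sharedPlace (N : PetriNet P T) (p : P) : Prop :=
  ∃ t t', t ≠ t' ∧ 0 < N.pre p t ∧ 0 < N.pre p t'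

/-- Homogeneous net with at most one shared place. -/
def H1S (N : PetriNet P T) : Prop :=
  N.homogeneous ∧ ∀ p q, N.sharedPlace p → N.sharedPlace q → p = q

/-- H1S net such that deleting the shared place (if any) yields a WMG≤ :
every non-shared place has at most one input and at most one output transition. -/
def H1S_WMGle (N : PetriNet P T) : Prop :=
  N.H1S ∧ ∀ p, ¬ N.sharedPlace p →
    (∀ t t', 0 < N.post t p → 0 < N.post t' p → t = t') ∧
    (∀ t t', 0 < N.pre p t → 0 < N.pre p t' → t = t')

end PetriNet

/-!
If `I·Y ⪈ 0` for some rational `Y ≥ 0`, clear denominators and realise `Y` as the Parikh vector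
of a firing sequence `σ`. From a marking large enough to fire `σ`, firing `σ` over and over never
decreases a place and strictly increases one, so the net is unbounded there.

Conversely, if `(N, M₀)` is unbounded, infinitely many markings are reachable, hence infinitely
many feasible sequences visit no marking twice. They form a finitely branching tree, so by Kőnig's
lemma it has an infinite branch; by Dickson's lemma the branch passes through markings `M ≤ M'`
in this order, with `M ≠ M'`, and the Parikh vector `Y` of the segment between them satisfies
`I·Y = M' - M ⪈ 0`.
-/
namespace List

theorem exists_seq_forall_prefix_of_infinite {α : Type*} [Finite α] {S : Set (List α)}
    (hS : S.Infinite) : ∃ a : ℕ → α, ∀ n, ∃ τ ∈ S, (List.range n).map a <+: τ := by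
  set E : List α → Set (List α) := fun σ => {τ ∈ S | σ <+: τ}
  have step : ∀ σ, (E σ).Infinite → ∃ x, (E (σ ++ [x])).Infinite := by
    intro σ hσ
    by_contra! hfin
    refine hσ (((Set.finite_iUnion hfin).insert σ).subset ?_)
    rintro τ ⟨hτS, ρ, rfl⟩
    rcases ρ with _ | ⟨x, ρ⟩
    · simp
    · exact Or.inr (Set.mem_iUnion.2 ⟨x, hτS, ρ, by simp⟩)
  choose next hnext using step
  let branch : ℕ → {σ // (E σ).Infinite} :=
    Nat.rec ⟨[], hS.mono fun τ hτ => ⟨hτ, nil_prefix⟩⟩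
      fun _ σ => ⟨σ.1 ++ [next σ.1 σ.2], hnext σ.1 σ.2⟩
  refine ⟨fun n => next (branch n).1 (branch n).2, fun n => ?_⟩
  have hbranch : (branch n).1 = (List.range n).map fun k => next (branch k).1 (branch k).2 := by
    induction n with
    | zero => rfl
    | succ n ih => simp only [range_succ, map_append, ← ih]; rfl
  obtain ⟨τ, hτ⟩ := (branch n).2.nonempty
  exact ⟨τ, hτ.1, hbranch ▸ hτ.2⟩

theorem exists_count_eq {α : Type*} [Fintype α] [DecidableEq α] (Z : α → ℕ) :
    ∃ σ : List α, ∀ a, σ.count a = Z a := by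
  refine ⟨(∑ a, Z a • {a} : Multiset α).toList, fun a => ?_⟩
  rw [← Multiset.coe_count, Multiset.coe_toList]
  simp [Multiset.count_sum', Multiset.count_singleton]

end List

theorem Rat.exists_pos_nat_mul_eq_natCast {ι : Type*} [Fintype ι] {Y : ι → ℚ} (hY : ∀ i, 0 ≤ Y i) :
    ∃ d : ℕ, 0 < d ∧ ∃ Z : ι → ℕ, ∀ i, (Z i : ℚ) = d * Y i := by
  refine ⟨∏ i, (Y i).den, Finset.prod_pos fun i _ => (Y i).den_pos, ?_⟩
  have hZ : ∀ i, ∃ z : ℕ, (z : ℚ) = (∏ i, (Y i).den : ℕ) * Y i := fun i => by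
    obtain ⟨m, hm⟩ : (Y i).den ∣ ∏ i, (Y i).den := Finset.dvd_prod_of_mem _ (Finset.mem_univ i)
    obtain ⟨n, hn⟩ := Int.eq_ofNat_of_zero_le (Rat.num_nonneg.2 (hY i))
    refine ⟨m * n, ?_⟩
    rw [hm]
    push_cast
    rw [mul_right_comm, Rat.den_mul_eq_num, hn]
    push_cast
    ring
  choose Z hZ using hZ
  exact ⟨Z, hZ⟩

namespace PetriNet

variable {P T : Type} (N : PetriNet P T)

theorem feasible_append (M : P → ℕ) (σ τ : List T) :
    N.feasible M (σ ++ τ) ↔ N.feasible M σ ∧ N.feasible (N.fireSeq M σ) τ := by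
  induction σ generalizing M with
  | nil => simp [feasible, fireSeq]
  | cons t σ ih => simp [feasible, fireSeq, ih, and_assoc]

theorem fireSeq_append (M : P → ℕ) (σ τ : List T) :
    N.fireSeq M (σ ++ τ) = N.fireSeq (N.fireSeq M σ) τ := by
  induction σ generalizing M with
  | nil => rfl
  | cons t σ ih => exact ih _

theorem feasible_of_prefix {M : P → ℕ} {σ τ : List T} (h : σ <+: τ) (hτ : N.feasible M τ) :
    N.feasible M σ := by
  obtain ⟨ρ, rfl⟩ := h
  exact ((N.feasible_append M σ ρ).1 hτ).1

theorem reach_trans {M₁ M₂ M₃ : P → ℕ} (h₁ : N.reach M₁ M₂) (h₂ : N.reach M₂ M₃) :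
    N.reach M₁ M₃ := by
  obtain ⟨σ, hσ, rfl⟩ := h₁
  obtain ⟨τ, hτ, rfl⟩ := h₂
  exact ⟨σ ++ τ, (N.feasible_append _ _ _).2 ⟨hσ, hτ⟩, N.fireSeq_append _ _ _⟩

theorem fire_cast {M : P → ℕ} {t : T} (ht : N.enabled M t) (p : P) :
    (N.fire M t p : ℤ) = M p + N.incidence p t := by
  have := ht p
  simp only [fire, incidence]
  omega

/-- The incidence matrix applied to the Parikh vector of `σ`. -/
noncomputable def effect [Fintype T] (σ : List T) (p : P) : ℤ :=
  ∑ t, N.incidence p t * σ.count t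

theorem effect_cons [Fintype T] (t : T) (σ : List T) (p : P) :
    N.effect (t :: σ) p = N.incidence p t + N.effect σ p := by
  simp [effect, List.count_cons, mul_add, Finset.sum_add_distrib, add_comm]

theorem cast_effect [Fintype T] (σ : List T) (p : P) :
    (N.effect σ p : ℚ) = ∑ t, (N.incidence p t : ℚ) * σ.count t := by
  push_cast [effect]
  rfl

theorem fireSeq_cast [Fintype T] {M : P → ℕ} {σ : List T} (hσ : N.feasible M σ) (p : P) :
    (N.fireSeq M σ p : ℤ) = M p + N.effect σ p := by
  induction σ generalizing M with
  | nil => simp [fireSeq, effect]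
  | cons t σ ih =>
    rw [fireSeq, ih hσ.2, N.fire_cast hσ.1, effect_cons, add_assoc]

theorem feasible_of_sum_pre_le {M : P → ℕ} {σ : List T}
    (h : ∀ p, (σ.map (N.pre p)).sum ≤ M p) : N.feasible M σ := by
  induction σ generalizing M with
  | nil => trivial
  | cons t σ ih =>
    simp only [List.map_cons, List.sum_cons] at h
    refine ⟨fun p => ?_, ih fun p => ?_⟩
    · have := h p
      omega
    · have := h p
      simp only [fire]
      omega

theorem not_bounded_of_effect_nonneg [Fintype T] {σ : List T} (hσ : ∀ p, 0 ≤ N.effect σ p)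
    {p₀ : P} (hp₀ : 0 < N.effect σ p₀) : ¬ N.bounded fun p => (σ.map (N.pre p)).sum := by
  set M₀ : P → ℕ := fun p => (σ.map (N.pre p)).sum
  have pump : ∀ n : ℕ, ∃ M, N.reach M₀ M ∧ (∀ p, M₀ p ≤ M p) ∧ M₀ p₀ + n ≤ M p₀ := by
    intro n
    induction n with
    | zero => exact ⟨M₀, ⟨[], trivial, rfl⟩, fun _ => le_rfl, le_rfl⟩
    | succ n ih =>
      obtain ⟨M, hM, hM₀M, hn⟩ := ih
      have hfeas : N.feasible M σ := N.feasible_of_sum_pre_le fun p => hM₀M p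
      refine ⟨_, N.reach_trans hM ⟨σ, hfeas, rfl⟩, fun p => ?_, ?_⟩
      · have := N.fireSeq_cast hfeas p
        have := hM₀M p
        have := hσ p
        omega
      · have := N.fireSeq_cast hfeas p₀
        omega
  rintro ⟨k, hk⟩
  obtain ⟨M, hM, -, hk1⟩ := pump (k + 1)
  have := hk M hM p₀
  omega

def simpleRun (M : P → ℕ) (σ : List T) : Prop :=
  Set.InjOn (fun i => N.fireSeq M (σ.take i)) (Set.Iic σ.length)

theorem simpleRun_of_prefix {M : P → ℕ} {σ τ : List T} (h : σ <+: τ) (hτ : N.simpleRun M τ) :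
    N.simpleRun M σ := by
  obtain ⟨ρ, rfl⟩ := h
  refine (hτ.mono (Set.Iic_subset_Iic.2 (by simp))).congr fun i hi => ?_
  simp only [List.take_append_of_le_length (Set.mem_Iic.1 hi)]

theorem exists_shorter_of_not_simpleRun {M : P → ℕ} {σ : List T} (hσ : N.feasible M σ)
    (hs : ¬ N.simpleRun M σ) :
    ∃ σ', N.feasible M σ' ∧ N.fireSeq M σ' = N.fireSeq M σ ∧ σ'.length < σ.length := by
  obtain ⟨i, hi, j, hj, heq, hij⟩ : ∃ i ≤ σ.length, ∃ j ≤ σ.length,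
      N.fireSeq M (σ.take i) = N.fireSeq M (σ.take j) ∧ i < j := by
    simp only [simpleRun, Set.InjOn, Set.mem_Iic, not_forall] at hs
    obtain ⟨i, hi, j, hj, heq, hne⟩ := hs
    rcases Nat.lt_or_gt_of_ne hne with h | h
    · exact ⟨i, hi, j, hj, heq, h⟩
    · exact ⟨j, hj, i, hi, heq.symm, h⟩
  have hsplit := (N.feasible_append M _ _).1 ((List.take_append_drop j σ).symm ▸ hσ)
  refine ⟨σ.take i ++ σ.drop j, ?_, ?_, ?_⟩
  · rw [N.feasible_append, heq]
    exact ⟨N.feasible_of_prefix (List.take_prefix i σ) hσ, hsplit.2⟩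
  · rw [N.fireSeq_append, heq, ← N.fireSeq_append, List.take_append_drop]
  · simp only [List.length_append, List.length_take, List.length_drop]
    omega

theorem exists_simpleRun_of_reach {M M' : P → ℕ} (h : N.reach M M') :
    ∃ σ, N.feasible M σ ∧ N.fireSeq M σ = M' ∧ N.simpleRun M σ := by
  obtain ⟨σ, ⟨hσ, rfl⟩, hmin⟩ :=
    (measure List.length).wf.has_min {σ | N.feasible M σ ∧ N.fireSeq M σ = M'} h
  refine ⟨σ, hσ, rfl, by_contra fun hs => ?_⟩
  obtain ⟨σ', hσ', heq, hlt⟩ := N.exists_shorter_of_not_simpleRun hσ hs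
  exact hmin σ' ⟨hσ', heq⟩ hlt

theorem bounded_of_finite_reach [Finite P] {M₀ : P → ℕ} (h : {M | N.reach M₀ M}.Finite) :
    N.bounded M₀ := by
  obtain ⟨B, hB⟩ := h.bddAbove
  obtain ⟨k, hk⟩ := (Set.finite_range B).bddAbove
  exact ⟨k, fun M hM p => (hB hM p).trans (hk ⟨p, rfl⟩)⟩

theorem exists_effect_pos_of_not_bounded [Finite P] [Fintype T] {M₀ : P → ℕ}
    (h : ¬ N.bounded M₀) : ∃ σ : List T, (∀ p, 0 ≤ N.effect σ p) ∧ ∃ p, 0 < N.effect σ p := by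
  set S := {σ | N.feasible M₀ σ ∧ N.simpleRun M₀ σ}
  have hS : S.Infinite := by
    refine Set.Infinite.of_image (N.fireSeq M₀) (fun hfin => h (N.bounded_of_finite_reach ?_))
    refine hfin.subset fun M hM => ?_
    obtain ⟨σ, hσ, rfl, hs⟩ := N.exists_simpleRun_of_reach hM
    exact ⟨σ, ⟨hσ, hs⟩, rfl⟩
  obtain ⟨a, ha⟩ := List.exists_seq_forall_prefix_of_infinite hS
  set w : ℕ → List T := fun n => (List.range n).map a
  have hw : ∀ n, w n ∈ S := fun n => by
    obtain ⟨τ, ⟨hτ, hτs⟩, hwτ⟩ := ha n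
    exact ⟨N.feasible_of_prefix hwτ hτ, N.simpleRun_of_prefix hwτ hτs⟩
  have htake : ∀ {i j}, i ≤ j → (w j).take i = w i := fun hij => by
    simp only [w, ← List.map_take, List.take_range, min_eq_left hij]
  obtain ⟨i, j, hij, hle⟩ := wellQuasiOrdered_le fun n => N.fireSeq M₀ (w n)
  have hne : N.fireSeq M₀ (w i) ≠ N.fireSeq M₀ (w j) := fun heq => hij.ne <| by
    have := (hw j).2 (x₁ := i) (x₂ := j) (by simpa [w] using hij.le) (by simp [w])
    exact this (by simpa only [htake hij.le, htake le_rfl] using heq)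
  set ρ := (w j).drop i
  have hρ : w j = w i ++ ρ := by rw [← htake hij.le, List.take_append_drop]
  have hK : ∀ p, (N.fireSeq M₀ (w j) p : ℤ) = N.fireSeq M₀ (w i) p + N.effect ρ p := by
    rw [hρ, N.fireSeq_append]
    exact N.fireSeq_cast ((N.feasible_append M₀ _ _).1 (hρ ▸ (hw j).1)).2
  refine ⟨ρ, fun p => ?_, ?_⟩
  · have : N.fireSeq M₀ (w i) p ≤ N.fireSeq M₀ (w j) p := hle p
    have := hK p
    omega
  · obtain ⟨p, hp⟩ : ∃ p, N.fireSeq M₀ (w i) p < N.fireSeq M₀ (w j) p := by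
      by_contra! hge
      exact hne (le_antisymm hle hge)
    have := hK p
    exact ⟨p, by omega⟩

end PetriNet

/-- a net is not structurally bounded iff there is a rational vector
`Y ≥ 0`, `Y ≠ 0`, with `I·Y ≥ 0` and `I·Y ≠ 0`. -/
theorem stmt10 {P T : Type} [Fintype P] [Fintype T] (N : PetriNet P T) :
    ¬ N.structBounded ↔
      ∃ Y : T → ℚ, (∀ t, 0 ≤ Y t) ∧ Y ≠ 0 ∧
        (∀ p, 0 ≤ ∑ t, (N.incidence p t : ℚ) * Y t) ∧
        (∃ p, ∑ t, (N.incidence p t : ℚ) * Y t ≠ 0) := by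
  constructor
  · intro h
    obtain ⟨M₀, hM₀⟩ := not_forall.1 h
    obtain ⟨σ, hσ, p, hp⟩ := N.exists_effect_pos_of_not_bounded hM₀
    have hpos : 0 < ∑ t, (N.incidence p t : ℚ) * σ.count t := by
      rw [← N.cast_effect]
      exact_mod_cast hp
    refine ⟨fun t => σ.count t, fun t => by positivity, fun hY => ?_, fun p => ?_, p, hpos.ne'⟩
    · simp only [funext_iff, Pi.zero_apply] at hY
      simp [hY] at hpos
    · rw [← N.cast_effect]
      exact_mod_cast hσ p
  · rintro ⟨Y, hY, -, hIY, p₀, hp₀⟩ hsb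
    obtain ⟨d, hd, Z, hZ⟩ := Rat.exists_pos_nat_mul_eq_natCast hY
    obtain ⟨σ, hσ⟩ := List.exists_count_eq Z
    have hscale : ∀ p, (N.effect σ p : ℚ) = d * ∑ t, (N.incidence p t : ℚ) * Y t := fun p => by
      simp only [N.cast_effect, hσ, hZ, Finset.mul_sum]
      exact Finset.sum_congr rfl fun t _ => by ring
    have hnonneg : ∀ p, 0 ≤ N.effect σ p := fun p => by
      exact_mod_cast (hscale p).symm ▸ mul_nonneg (Nat.cast_nonneg d) (hIY p)
    have hpos : 0 < N.effect σ p₀ := by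
      exact_mod_cast (hscale p₀).symm ▸ mul_pos (Nat.cast_pos.2 hd) ((hIY p₀).lt_of_ne' hp₀)
    exact N.not_bounded_of_effect_nonneg hnonneg hpos (hsb _)
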